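/- arXiv:1606.04059 — 3 statements merged into one kernel-verified Lean document; each statement's English description precedes it below -/
import Mathlib

section
/- Let L₂ = {aᵐ·bⁿ·a² : m ≥ 3, n ≥ 1} over the alphabet {a, b}. Then L₂ is a single syntactic class: for every w ∈ L₂ and every nonempty word w' over {a, b}, w' is syntactically equivalent to w with respect to L₂ if and only if w' ∈ L₂. -/
/-!
All words of `L2` act identically on the states of the minimal automaton of `L2`: reading `a³`
or more `a`'s has the same effect, as does reading one or more `b`'s. Words acting identically on
the states of an automaton are syntactically equivalent for the language it accepts. Conversely,
the empty context shows that a word syntactically equivalent to a word of `L2` lies in `L2`.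
-/

/-- The two-letter alphabet `{a, b}`. -/
inductive AB : Type
  | a : AB
  | b : AB

/-- Words over `{a, b}`, as elements of the free monoid (the empty word is `1`). -/
abbrev Word : Type := FreeMonoid AB

/-- The letter `a` as a word. -/
def wa : Word := FreeMonoid.of AB.a

/-- The letter `b` as a word. -/
def wb : Word := FreeMonoid.of AB.b

/-- Syntactic equivalence of `u` and `v` with respect to the language `L`:
for all (possibly empty) words `p, q`, `p·u·q ∈ L ↔ p·v·q ∈ L`. -/
def SynEq (L : Set Word) (u v : Word) : Prop :=
  ∀ p q : Word, p * u * q ∈ L ↔ p * v * q ∈ L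

/-- The language `L₂ = a²a⁺b⁺a² = {aᵐ·bⁿ·a² : m ≥ 3, n ≥ 1}`. -/
def L2 : Set Word :=
  {w | ∃ m n : ℕ, 3 ≤ m ∧ 1 ≤ n ∧ w = wa ^ m * wb ^ n * wa ^ 2}


namespace DFA

variable {α σ : Type*} (M : DFA α σ)

theorem eval_append_append_of_evalFrom_eq {u v : List α}
    (h : ∀ s, M.evalFrom s u = M.evalFrom s v) (p q : List α) :
    M.eval (p ++ u ++ q) = M.eval (p ++ v ++ q) := by
  simp only [eval, evalFrom_of_append, h]

theorem evalFrom_replicate_of_le {c : α} {k : ℕ}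
    (h : ∀ s, M.step (M.evalFrom s (List.replicate k c)) c = M.evalFrom s (List.replicate k c))
    {m : ℕ} (hm : k ≤ m) (s : σ) :
    M.evalFrom s (List.replicate m c) = M.evalFrom s (List.replicate k c) := by
  induction m, hm using Nat.le_induction with
  | base => rfl
  | succ m _ ih => rw [List.replicate_succ', evalFrom_append_singleton, ih, h]

end DFA

theorem synEq_of_evalFrom_eq {σ : Type*} (M : DFA AB σ) {L : Set Word}
    (hL : ∀ w, w ∈ L ↔ FreeMonoid.toList w ∈ M.accepts) {u v : Word}
    (h : ∀ s, M.evalFrom s (FreeMonoid.toList u) = M.evalFrom s (FreeMonoid.toList v)) :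
    SynEq L u v := by
  intro p q
  simp only [hL, FreeMonoid.toList_mul, DFA.mem_accepts, M.eval_append_append_of_evalFrom_eq h]

theorem FreeMonoid.toList_of_pow {α : Type*} (x : α) (n : ℕ) :
    FreeMonoid.toList (FreeMonoid.of x ^ n) = List.replicate n x := by
  induction n with
  | zero => rfl
  | succ n ih => rw [pow_succ, toList_mul, ih, toList_of, List.replicate_succ']

theorem mem_L2_iff_toList {w : Word} : w ∈ L2 ↔ ∃ m n, 3 ≤ m ∧ 1 ≤ n ∧
    FreeMonoid.toList w = List.replicate m AB.a ++ List.replicate n AB.b ++ [AB.a, AB.a] := by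
  simp only [L2, Set.mem_ofPred_eq, ← FreeMonoid.toList.injective.eq_iff, FreeMonoid.toList_mul,
    wa, wb, FreeMonoid.toList_of_pow]
  rfl

namespace L2DFA

open AB

/-- States of the minimal automaton of `L2`, named after the prefix read so far,
with `a3` standing for `a^{≥3}` and `b` for `b⁺`. -/
inductive State : Type
  | start | a1 | a2 | a3 | a3b | a3ba | a3baa | dead

open State

def step : State → AB → State
  | start, a => a1
  | a1, a => a2
  | a2, a => a3
  | a3, a => a3
  | a3, b => a3b
  | a3b, b => a3b
  | a3b, a => a3ba
  | a3ba, a => a3baa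
  | _, _ => dead

def dfa : DFA AB State := ⟨step, start, {a3baa}⟩

def Reaches : State → List AB → Prop
  | start, x => x = []
  | a1, x => x = [a]
  | a2, x => x = [a, a]
  | a3, x => ∃ m, 3 ≤ m ∧ x = List.replicate m a
  | a3b, x => ∃ m n, 3 ≤ m ∧ 1 ≤ n ∧ x = List.replicate m a ++ List.replicate n b
  | a3ba, x => ∃ m n, 3 ≤ m ∧ 1 ≤ n ∧ x = List.replicate m a ++ List.replicate n b ++ [a]
  | a3baa, x =>
    ∃ m n, 3 ≤ m ∧ 1 ≤ n ∧ x = List.replicate m a ++ List.replicate n b ++ [a, a]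
  | dead, _ => True

theorem reaches_step {s : State} {x : List AB} (c : AB) (hx : Reaches s x) :
    Reaches (step s c) (x ++ [c]) :=
  match s, c, hx with
  | start, a, rfl => rfl
  | a1, a, rfl => rfl
  | a2, a, rfl => ⟨3, le_rfl, rfl⟩
  | a3, a, ⟨m, hm, rfl⟩ => ⟨m + 1, by omega, List.replicate_succ'.symm⟩
  | a3, b, ⟨m, hm, rfl⟩ => ⟨m, 1, hm, le_rfl, rfl⟩
  | a3b, a, ⟨m, n, hm, hn, rfl⟩ => ⟨m, n, hm, hn, rfl⟩
  | a3b, b, ⟨m, n, hm, hn, rfl⟩ => ⟨m, n + 1, hm, by omega, by simp [List.replicate_succ']⟩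
  | a3ba, a, ⟨m, n, hm, hn, rfl⟩ => ⟨m, n, hm, hn, by simp⟩
  | start, b, _ | a1, b, _ | a2, b, _ | a3ba, b, _ | a3baa, _, _ | dead, _, _ => trivial

theorem reaches_eval (x : List AB) : Reaches (dfa.eval x) x := by
  induction x using List.reverseRecOn with
  | nil => rfl
  | append_singleton x c ih => rw [DFA.eval_append_singleton]; exact reaches_step c ih

theorem evalFrom_of_mem_L2 {w : Word} (hw : w ∈ L2) (s : State) :
    dfa.evalFrom s (FreeMonoid.toList w) = dfa.evalFrom s [a, a, a, b, a, a] := by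
  obtain ⟨m, n, hm, hn, hw⟩ := mem_L2_iff_toList.mp hw
  have ha : ∀ s, dfa.evalFrom s (List.replicate m a) = dfa.evalFrom s [a, a, a] :=
    dfa.evalFrom_replicate_of_le (fun s => by cases s <;> rfl) hm
  have hb : ∀ s, dfa.evalFrom s (List.replicate n b) = dfa.evalFrom s [b] :=
    dfa.evalFrom_replicate_of_le (fun s => by cases s <;> rfl) hn
  rw [hw, DFA.evalFrom_of_append, DFA.evalFrom_of_append, ha, hb]
  cases s <;> rfl

theorem mem_L2_iff_mem_accepts (w : Word) : w ∈ L2 ↔ FreeMonoid.toList w ∈ dfa.accepts := by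
  refine ⟨fun hw => show dfa.eval _ = a3baa from evalFrom_of_mem_L2 hw start, fun hw => ?_⟩
  have hreach := reaches_eval (FreeMonoid.toList w)
  rw [show dfa.eval _ = a3baa from hw] at hreach
  exact mem_L2_iff_toList.mpr hreach

end L2DFA

theorem L2_single_syntactic_class_general (w : Word) (hw : w ∈ L2) (w' : Word) :
    SynEq L2 w' w ↔ w' ∈ L2 := by
  refine ⟨fun h => by simpa using (h 1 1).mpr (by simpa using hw), fun hw' => ?_⟩
  exact synEq_of_evalFrom_eq L2DFA.dfa L2DFA.mem_L2_iff_mem_accepts fun s =>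
    (L2DFA.evalFrom_of_mem_L2 hw' s).trans (L2DFA.evalFrom_of_mem_L2 hw s).symm

/-- `L₂` is a single syntactic class: for `w ∈ L₂` and any nonempty word
`w'`, `w'` is syntactically equivalent to `w` with respect to `L₂` iff `w' ∈ L₂`. -/
theorem L2_single_syntactic_class (w : Word) (hw : w ∈ L2) (w' : Word) (hw' : w' ≠ 1) :
    SynEq L2 w' w ↔ w' ∈ L2 :=
  L2_single_syntactic_class_general w hw w'
end

section
/- Let L₃ = {(a²b)ᵐ·(ab²)ⁿ·(a²b)² : m ≥ 3, n ≥ 1} over the alphabet {a, b}. Then the syntactic class of the word a²b with respect to L₃ is the singleton {a²b}: every nonempty word w over {a, b} that is syntactically equivalent to a²b with respect to L₃ equals a²b. -/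
/-- The language `L₃ = (a²b)²(a²b)⁺(ab²)⁺(a²b)² = {(a²b)ᵐ·(ab²)ⁿ·(a²b)² : m ≥ 3, n ≥ 1}`. -/
def L3 : Set Word :=
  {w | ∃ m n : ℕ, 3 ≤ m ∧ 1 ≤ n ∧
    w = (wa ^ 2 * wb) ^ m * (wa * wb ^ 2) ^ n * (wa ^ 2 * wb) ^ 2}

theorem FreeMonoid.length_pow {α : Type*} (x : FreeMonoid α) (n : ℕ) :
    (x ^ n).length = n * x.length := by
  induction n with
  | zero => rw [pow_zero, zero_mul, length_one]
  | succ n ih => rw [pow_succ, length_mul, ih, Nat.succ_mul]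

theorem FreeMonoid.countP'_pow {α : Type*} (p : α → Prop) [DecidablePred p]
    (x : FreeMonoid α) (n : ℕ) : (x ^ n).countP' p = n * x.countP' p := by
  induction n with
  | zero => rw [pow_zero, zero_mul, countP'_one]
  | succ n ih => rw [pow_succ, countP'_mul, ih, Nat.succ_mul]

deriving instance DecidableEq for AB

open FreeMonoid

local notation "aab" => wa ^ 2 * wb
local notation "abb" => wa * wb ^ 2

theorem length_wa : wa.length = 1 := rfl
theorem length_wb : wb.length = 1 := rfl
theorem countP'_eq_b_wa : wa.countP' (· = AB.b) = 0 := rfl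
theorem countP'_eq_b_wb : wb.countP' (· = AB.b) = 1 := rfl

theorem mul_abb_mul_ne_mul_aab_mul (p x y : Word) : p * (abb * x) ≠ p * (aab * y) := by
  intro h
  have h := congrArg toList (mul_left_cancel h)
  simp [wa, wb, pow_two, mul_assoc] at h

theorem aab_pow_mul_abb_pow_mem_L3 {m n : ℕ} (hm : 3 ≤ m) (hn : 1 ≤ n) :
    aab ^ m * abb ^ n * aab ^ 2 ∈ L3 :=
  ⟨m, n, hm, hn, rfl⟩

theorem SynEq.exists_eq_aab_pow_mul_abb_pow {w : Word} (h : SynEq L3 w (aab)) :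
    ∃ j k : ℕ, 1 ≤ j ∧ w = aab ^ j * abb ^ k := by
  obtain ⟨m, n, hm, hn, heq⟩ := (h (aab ^ 2) (abb * aab ^ 2)).mpr <| by
    simpa only [pow_succ, pow_zero, one_mul, mul_assoc] using
      aab_pow_mul_abb_pow_mem_L3 (m := 3) (n := 1) le_rfl le_rfl
  obtain ⟨j, rfl⟩ : ∃ j, m = 2 + j := ⟨m - 2, by omega⟩
  obtain ⟨k, rfl⟩ : ∃ k, n = k + 1 := ⟨n - 1, by omega⟩
  refine ⟨j, k, by omega, mul_left_cancel (a := aab ^ 2) (mul_right_cancel (b := abb * aab ^ 2) ?_)⟩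
  simpa only [pow_add, pow_succ, pow_zero, one_mul, mul_assoc] using heq

theorem abb_pow_succ_not_synEq_aab (j k : ℕ) : ¬ SynEq L3 (aab ^ j * abb ^ (k + 1)) (aab) := by
  intro h
  obtain ⟨m, n, -, -, heq⟩ := (h (aab ^ 2) (aab ^ 2 * (abb * aab ^ 2))).mpr <| by
    simpa only [pow_succ, pow_zero, one_mul, mul_assoc] using
      aab_pow_mul_abb_pow_mem_L3 (m := 5) (n := 1) (by norm_num) le_rfl
  have hlen := congrArg length heq
  have hb := congrArg (countP' (· = AB.b)) heq
  simp only [length_mul, length_pow, length_wa, length_wb, countP'_mul, countP'_pow,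
    countP'_eq_b_wa, countP'_eq_b_wb] at hlen hb
  obtain rfl : m = 2 + j + 2 := by omega
  obtain rfl : n = k + 2 := by omega
  refine mul_abb_mul_ne_mul_aab_mul (aab ^ 2 * aab ^ j) (abb ^ k * aab ^ 2 * abb * aab ^ 2)
    (aab * abb ^ (k + 2) * aab ^ 2) ?_
  rw [pow_succ' (abb) k] at heq
  simpa only [pow_add, pow_succ, pow_zero, one_mul, mul_assoc] using heq

theorem aab_pow_add_two_not_synEq_aab (j : ℕ) : ¬ SynEq L3 (aab ^ (j + 2)) (aab) := by
  intro h
  obtain ⟨m, n, -, -, heq⟩ := (h (aab ^ 3 * abb * aab) 1).mpr <| by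
    simpa only [pow_succ, pow_zero, one_mul, mul_one, mul_assoc] using
      aab_pow_mul_abb_pow_mem_L3 (m := 3) (n := 1) le_rfl le_rfl
  have hlen := congrArg length heq
  have hb := congrArg (countP' (· = AB.b)) heq
  simp only [length_mul, length_pow, length_wa, length_wb, length_one, countP'_mul, countP'_pow,
    countP'_eq_b_wa, countP'_eq_b_wb, countP'_one] at hlen hb
  obtain rfl : m = 3 + 1 + j := by omega
  obtain rfl : n = 1 := by omega
  refine mul_abb_mul_ne_mul_aab_mul (aab ^ 3) (aab * aab ^ (j + 2)) (aab ^ j * abb * aab ^ 2) ?_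
  simpa only [pow_add, pow_succ, pow_zero, one_mul, mul_one, mul_assoc] using heq

theorem synClass_of_a2b_is_singleton_general (w : Word) :
    SynEq L3 w (wa ^ 2 * wb) ↔ w = wa ^ 2 * wb := by
  refine ⟨fun h => ?_, fun hw => hw ▸ fun _ _ => Iff.rfl⟩
  obtain ⟨j, k, hj, rfl⟩ := h.exists_eq_aab_pow_mul_abb_pow
  obtain rfl : k = 0 := by
    by_contra hk
    obtain ⟨k, rfl⟩ := Nat.exists_eq_succ_of_ne_zero hk
    exact abb_pow_succ_not_synEq_aab j k h
  rw [pow_zero, mul_one] at h ⊢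
  obtain rfl : j = 1 := by
    by_contra hj1
    obtain ⟨j, rfl⟩ : ∃ i, j = i + 2 := ⟨j - 2, by omega⟩
    exact aab_pow_add_two_not_synEq_aab j h
  exact pow_one _

/-- the syntactic class of `a²b` with respect to `L₃` is the singleton
`{a²b}`: a nonempty word `w` is syntactically equivalent to `a²b` iff `w = a²b`. -/
theorem synClass_of_a2b_is_singleton (w : Word) (hw : w ≠ 1) :
    SynEq L3 w (wa ^ 2 * wb) ↔ w = wa ^ 2 * wb :=
  synClass_of_a2b_is_singleton_general w
end

section
/- Let S be a finite semigroup in which every element s satisfies s^{k+1} = s for some integer k ≥ 1 (i.e., S is completely regular). Then for all p, q ∈ S and all integers m ≥ 1 and n ≥ 1 such that (p²q)ᵐ is idempotent and (pq²)ⁿ is idempotent, one has (p²·q)^{2m−1} · (p·q²)ⁿ · (p²·q)² = p²·q. -/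
/-- The `n`-th power `sⁿ` of an element `s` of a semigroup, for `n ≥ 1`
(by convention `spow s 0 = s`, but this junk value is never used below). -/
def spow {S : Type*} [Semigroup S] (s : S) : ℕ → S
  | 0 => s
  | 1 => s
  | n + 2 => spow s (n + 1) * s

/-!
Adjoin an identity and fix a common exponent `K ≥ 1` with `s ^ (K + 1) = s` for the five
elements `q, p²q, pq², pq, qp`; then `(p²q)ᵐ = (p²q)^K` and `(pq²)ⁿ = (pq²)^K`, and the claim
reduces to `a^K b^K a = a` for `a = p·c`, `b = c·q`, `c = pq`. With `e = c^K` one checks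
`a^K e = a^K`, `b^K e = e` and `b^K a = e a`; the last one because `q e p = qp`, by the
periodicity of `qp`. Hence `a^K b^K a = a^K e a = a^K a = a`.
-/

section Monoid

variable {M : Type*} [Monoid M]

theorem pow_mul_add_one_eq_self {s : M} {k : ℕ} (h : s ^ (k + 1) = s) :
    ∀ t : ℕ, s ^ (k * t + 1) = s
  | 0 => by simp
  | t + 1 => by
    rw [show k * (t + 1) + 1 = k * t + 1 + k by ring, pow_add, pow_mul_add_one_eq_self h t,
      ← pow_succ', h]

theorem exists_pow_succ_eq_self_of_forall_mem (l : List M)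
    (h : ∀ s ∈ l, ∃ k, 1 ≤ k ∧ s ^ (k + 1) = s) :
    ∃ K, 1 ≤ K ∧ ∀ s ∈ l, s ^ (K + 1) = s := by
  induction l with
  | nil => exact ⟨1, le_rfl, by simp⟩
  | cons a l ih =>
    obtain ⟨k, hk, ha⟩ := h a List.mem_cons_self
    obtain ⟨K, hK, hl⟩ := ih fun s hs => h s (List.mem_cons_of_mem a hs)
    refine ⟨k * K, Nat.one_le_iff_ne_zero.2 (by positivity), ?_⟩
    rintro s (_ | ⟨_, hs⟩)
    · exact pow_mul_add_one_eq_self ha K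
    · rw [mul_comm]; exact pow_mul_add_one_eq_self (hl s hs) k

theorem isIdempotentElem_pow_of_pow_succ_eq_self {s : M} {K : ℕ} (hK : 1 ≤ K)
    (h : s ^ (K + 1) = s) : IsIdempotentElem (s ^ K) := by
  obtain ⟨L, rfl⟩ : ∃ L, K = L + 1 := ⟨K - 1, by omega⟩
  calc s ^ (L + 1) * s ^ (L + 1) = s ^ L * s ^ (L + 1 + 1) := by
        rw [← pow_add, ← pow_add]; ring_nf
    _ = s ^ (L + 1) := by rw [h, pow_succ]

theorem pow_eq_pow_of_isIdempotentElem {s : M} {K m : ℕ} (hK : 1 ≤ K) (hm : 1 ≤ m)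
    (h : s ^ (K + 1) = s) (hid : IsIdempotentElem (s ^ m)) : s ^ m = s ^ K := by
  obtain ⟨L, rfl⟩ : ∃ L, K = L + 1 := ⟨K - 1, by omega⟩
  obtain ⟨l, rfl⟩ : ∃ l, m = l + 1 := ⟨m - 1, by omega⟩
  calc s ^ (l + 1) = (s ^ (l + 1)) ^ (L + 1) := (hid.pow_succ_eq L).symm
    _ = (s ^ (L + 1)) ^ (l + 1) := by rw [← pow_mul, ← pow_mul, mul_comm]
    _ = s ^ (L + 1) := (isIdempotentElem_pow_of_pow_succ_eq_self hK h).pow_succ_eq l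

theorem pow_mul_pow_mul_self_of_pow_succ_eq_self {x y : M} {K : ℕ} (hK : 1 ≤ K)
    (hy : y ^ (K + 1) = y) (hxy : (x * y) ^ (K + 1) = x * y)
    (hyx : (y * x) ^ (K + 1) = y * x) (ha : (x * x * y) ^ (K + 1) = x * x * y)
    (hb : (x * y * y) ^ (K + 1) = x * y * y) :
    (x * x * y) ^ K * (x * y * y) ^ K * (x * x * y) = x * x * y := by
  rw [mul_assoc x x y] at ha ⊢
  obtain ⟨L, rfl⟩ : ∃ L, K = L + 1 := ⟨K - 1, by omega⟩
  set c := x * y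
  have hc : c = c * y * y ^ L :=
    calc c = x * y ^ (L + 1 + 1) := by rw [hy]
      _ = c * y * y ^ L := by rw [pow_succ', pow_succ']; simp only [c, mul_assoc]
  have hbc : (c * y) ^ (L + 1) * c = c :=
    calc (c * y) ^ (L + 1) * c = (c * y) ^ (L + 1 + 1) * y ^ L := by
          rw [pow_succ _ (L + 1), mul_assoc ((c * y) ^ (L + 1)), ← hc]
      _ = c := by rw [hb, ← hc]
  have hbe : (c * y) ^ (L + 1) * c ^ (L + 1) = c ^ (L + 1) := by
    rw [pow_succ' c, ← mul_assoc, hbc]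
  have hae : (x * c) ^ (L + 1) * c ^ (L + 1) = (x * c) ^ (L + 1) := by
    rw [pow_succ, mul_assoc, mul_assoc, ← pow_succ', hxy]
  have hyex : y * c ^ (L + 1) * x = y * x := by
    rw [mul_assoc, mul_pow_mul, ← mul_assoc, ← pow_succ', hyx]
  have hb_pow : (c * y) ^ (L + 1) = c * (y * c) ^ L * y := by
    rw [pow_succ, ← mul_assoc, mul_pow_mul]
  have hba : (c * y) ^ (L + 1) * (x * c) = c ^ (L + 1) * (x * c) := by
    calc (c * y) ^ (L + 1) * (x * c) = c * (y * c) ^ L * (y * x) * c := by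
          rw [hb_pow]; simp only [mul_assoc]
      _ = (c * y) ^ (L + 1) * c ^ (L + 1) * (x * c) := by
          rw [← hyex, hb_pow]; simp only [mul_assoc]
      _ = c ^ (L + 1) * (x * c) := by rw [hbe]
  calc (x * c) ^ (L + 1) * (c * y) ^ (L + 1) * (x * c)
      = (x * c) ^ (L + 1) * c ^ (L + 1) * (x * c) := by rw [mul_assoc, hba, ← mul_assoc]
    _ = x * c := by rw [hae, ← pow_succ, ha]

theorem pow_two_mul_sub_one_mul_pow_mul_sq_eq_self {a b : M} {K m n : ℕ} (hK : 1 ≤ K)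
    (hm : 1 ≤ m) (hn : 1 ≤ n) (ha : a ^ (K + 1) = a) (hb : b ^ (K + 1) = b)
    (hma : IsIdempotentElem (a ^ m)) (hnb : IsIdempotentElem (b ^ n))
    (hab : a ^ K * b ^ K * a = a) :
    a ^ (2 * m - 1) * b ^ n * a ^ 2 = a := by
  have haK := pow_eq_pow_of_isIdempotentElem hK hm ha hma
  rw [pow_eq_pow_of_isIdempotentElem hK hn hb hnb]
  calc a ^ (2 * m - 1) * b ^ K * a ^ 2 = a ^ (m - 1) * (a ^ m * b ^ K * a) * a := by
        rw [show 2 * m - 1 = m - 1 + m by omega, pow_add, sq]; simp only [mul_assoc]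
    _ = a ^ (m - 1) * a * a := by rw [haK, hab]
    _ = a ^ m * a := by rw [← pow_succ, Nat.sub_add_cancel hm]
    _ = a := by rw [haK, ← pow_succ, ha]

end Monoid

theorem WithOne.coe_spow {S : Type*} [Semigroup S] (s : S) :
    ∀ {n : ℕ}, 1 ≤ n → ((spow s n : S) : WithOne S) = (s : WithOne S) ^ n
  | 1, _ => by simp [spow]
  | n + 2, _ => by
    rw [spow, WithOne.coe_mul, WithOne.coe_spow s (by omega : 1 ≤ n + 1), ← pow_succ]

theorem cr_pseudoidentity_elementwise_general {S : Type*} [Semigroup S]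
    (hcr : ∀ s : S, ∃ k : ℕ, 1 ≤ k ∧ spow s (k + 1) = s)
    (p q : S) (m n : ℕ) (hm : 1 ≤ m) (hn : 1 ≤ n)
    (hmid : spow (p * p * q) m * spow (p * p * q) m = spow (p * p * q) m)
    (hnid : spow (p * q * q) n * spow (p * q * q) n = spow (p * q * q) n) :
    spow (p * p * q) (2 * m - 1) * spow (p * q * q) n * spow (p * p * q) 2
      = p * p * q := by
  have hper (s : S) : ∃ k, 1 ≤ k ∧ (s : WithOne S) ^ (k + 1) = s := by
    obtain ⟨k, hk, h⟩ := hcr s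
    exact ⟨k, hk, by rw [← WithOne.coe_spow s (by omega), h]⟩
  have hidem {s : S} {k : ℕ} (hk : 1 ≤ k) (h : spow s k * spow s k = spow s k) :
      IsIdempotentElem ((s : WithOne S) ^ k) := by
    rw [IsIdempotentElem, ← WithOne.coe_spow s hk, ← WithOne.coe_mul, h]
  obtain ⟨K, hK, hKper⟩ := exists_pow_succ_eq_self_of_forall_mem
    ([q, p * q, q * p, p * p * q, p * q * q].map ((↑) : S → WithOne S))
    (List.forall_mem_map.2 fun s _ => hper s)
  simp only [List.map_cons, List.map_nil, List.mem_cons, List.not_mem_nil, or_false,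
    forall_eq_or_imp, forall_eq, WithOne.coe_mul] at hKper
  apply WithOne.coe_injective
  push_cast [WithOne.coe_spow _ (by omega : 1 ≤ 2 * m - 1), WithOne.coe_spow _ hn,
    WithOne.coe_spow _ (by omega : 1 ≤ 2)]
  obtain ⟨hq, hpq, hqp, ha, hb⟩ := hKper
  refine pow_two_mul_sub_one_mul_pow_mul_sq_eq_self hK hm hn ha hb ?_ ?_
    (pow_mul_pow_mul_self_of_pow_succ_eq_self hK hq hpq hqp ha hb)
  · simpa using hidem hm hmid
  · simpa using hidem hn hnid

/-- in a finite completely regular semigroup `S` (every element `s`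
satisfies `s^(k+1) = s` for some `k ≥ 1`), for all `p, q ∈ S` and all `m, n ≥ 1`
such that `(p²q)ᵐ` and `(pq²)ⁿ` are idempotent, one has
`(p²·q)^(2m−1) · (p·q²)ⁿ · (p²·q)² = p²·q`. -/
theorem cr_pseudoidentity_elementwise {S : Type*} [Semigroup S] [Fintype S]
    (hcr : ∀ s : S, ∃ k : ℕ, 1 ≤ k ∧ spow s (k + 1) = s)
    (p q : S) (m n : ℕ) (hm : 1 ≤ m) (hn : 1 ≤ n)
    (hmid : spow (p * p * q) m * spow (p * p * q) m = spow (p * p * q) m)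
    (hnid : spow (p * q * q) n * spow (p * q * q) n = spow (p * q * q) n) :
    spow (p * p * q) (2 * m - 1) * spow (p * q * q) n * spow (p * p * q) 2
      = p * p * q :=
  cr_pseudoidentity_elementwise_general hcr p q m n hm hn hmid hnid
end
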